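/- For all real x, y with 0 ≤ y ≤ x, one has sinh(x−y)/(cosh(x)·sinh(y)) ≤ (x−y)/y for y > 0; in particular sinh((a−b)√s)/(cosh(a√s)·sinh(b√s)) ≤ (a−b)/b for all s > 0 when a ≥ b > 0. -/

import Mathlib

open Real

/-! Since `sinh` is convex on `[0, ∞)`, `sinh t ≤ t cosh t`; with `cosh (x - y) ≤ cosh x` and
`y ≤ sinh y` this gives `sinh (x - y) ≤ (x - y) cosh x` and the bound. The second inequality is
the first at `x = a √s`, `y = b √s`, where the factor `√s` cancels on the right. -/

namespace Real

theorem sinh_le_mul_cosh {t : ℝ} (ht : 0 ≤ t) : sinh t ≤ t * cosh t := by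
  have hderiv : ∀ u ∈ interior (Set.Icc 0 t), deriv sinh u ≤ cosh t := by
    intro u hu
    rw [interior_Icc] at hu
    rw [deriv_sinh, cosh_le_cosh, abs_of_pos hu.1, abs_of_nonneg ht]
    exact hu.2.le
  have := (convex_Icc 0 t).image_sub_le_mul_sub_of_deriv_le continuous_sinh.continuousOn
    differentiable_sinh.differentiableOn hderiv 0 ⟨le_rfl, ht⟩ t ⟨ht, le_rfl⟩ ht
  simpa [mul_comm] using this

theorem sinh_sub_le_mul_cosh {x y : ℝ} (hy : 0 ≤ y) (hyx : y ≤ x) :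
    sinh (x - y) ≤ (x - y) * cosh x := by
  have hxy : 0 ≤ x - y := sub_nonneg.2 hyx
  calc sinh (x - y) ≤ (x - y) * cosh (x - y) := sinh_le_mul_cosh hxy
    _ ≤ (x - y) * cosh x := by
      gcongr
      rw [cosh_le_cosh, abs_of_nonneg hxy, abs_of_nonneg (hy.trans hyx)]
      linarith

theorem sinh_sub_div_cosh_mul_sinh_le {x y : ℝ} (hy : 0 < y) (hyx : y ≤ x) :
    sinh (x - y) / (cosh x * sinh y) ≤ (x - y) / y := by
  have hsinh : 0 < sinh y := sinh_pos_iff.2 hy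
  have hcosh : 0 < cosh x := cosh_pos x
  calc sinh (x - y) / (cosh x * sinh y) ≤ (x - y) * cosh x / (cosh x * sinh y) := by
        gcongr
        exact sinh_sub_le_mul_cosh hy.le hyx
    _ = (x - y) / sinh y := by field_simp
    _ ≤ (x - y) / y := by
        gcongr
        exact self_le_sinh_iff.2 hy.le

end Real

theorem G_bounded_by_limit :
    (∀ x y : ℝ, 0 < y → y ≤ x →
      Real.sinh (x - y) / (Real.cosh x * Real.sinh y) ≤ (x - y) / y) ∧
    ∀ a b s : ℝ, 0 < b → b ≤ a → 0 < s →
      Real.sinh ((a - b) * Real.sqrt s) /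
          (Real.cosh (a * Real.sqrt s) * Real.sinh (b * Real.sqrt s)) ≤
        (a - b) / b := by
  refine ⟨fun x y hy hyx => sinh_sub_div_cosh_mul_sinh_le hy hyx, fun a b s hb hba hs => ?_⟩
  have hsqrt : 0 < √s := sqrt_pos.2 hs
  have h := sinh_sub_div_cosh_mul_sinh_le (mul_pos hb hsqrt)
    (mul_le_mul_of_nonneg_right hba hsqrt.le)
  rwa [← sub_mul, mul_div_mul_right _ _ hsqrt.ne'] at h
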